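/- Smoothing bound for sequentially projected ensembles: let {p(x), φ_x}_{x ∈ 𝒳} be a finite ensemble of d × d density matrices with average state φ̄ = Σ_x p(x) φ_x, let {Λ_x}_{x ∈ 𝒳} be orthogonal projections satisfying Σ_x p(x) Tr{Λ_x φ_x} ≥ 1 − ε, and let Π be an orthogonal projection satisfying Tr{Π φ̄} ≥ 1 − ε, for some ε ∈ [0,1]. Then Σ_x p(x) Tr{Π Λ_x φ_x Λ_x Π} ≥ 1 − 2ε − 2√ε. -/

import Mathlib

open scoped ComplexOrder

/-!
Since `Λ φ Λ = φ - (1 - Λ) φ Λ - φ (1 - Λ)`, compressing by `Π` and taking traces leaves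
`Tr(Π φ)` minus two cross terms. Cauchy–Schwarz for the inner product
`⟪A, B⟫ = Tr(B φ Aᴴ)` bounds each of them by `√Tr((1 - Λ) φ (1 - Λ)) = √(1 - Tr(Λ φ))`,
so `Tr(Π Λ φ Λ Π) ≥ Tr(Π φ) - 2 √(1 - Tr(Λ φ))`. Averaging over `p`, concavity of the
square root turns the error terms into `2 √ε`, and `Tr(Π φ̄) ≥ 1 - ε` then gives
`1 - ε - 2 √ε ≥ 1 - 2ε - 2 √ε`.
-/

namespace Matrix

variable {𝕜 n : Type*} [RCLike 𝕜] [Fintype n]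

theorem PosSemidef.norm_trace_mul_mul_le {M : Matrix n n 𝕜} (hM : M.PosSemidef)
    (A B : Matrix n n 𝕜) :
    ‖(A * M * B).trace‖ ≤
      √(RCLike.re (A * M * Aᴴ).trace) * √(RCLike.re (Bᴴ * M * B).trace) := by
  let := M.toMatrixSeminormedAddCommGroup hM
  let := M.toMatrixInnerProductSpace hM
  have h := norm_inner_le_norm (𝕜 := 𝕜) Bᴴ A
  rw [norm_eq_sqrt_re_inner (𝕜 := 𝕜) A, norm_eq_sqrt_re_inner (𝕜 := 𝕜) Bᴴ] at h
  change ‖(A * M * Bᴴᴴ).trace‖ ≤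
    √(RCLike.re (Bᴴ * M * Bᴴᴴ).trace) * √(RCLike.re (A * M * Aᴴ).trace) at h
  rwa [conjTranspose_conjTranspose, mul_comm] at h

theorem _root_.IsIdempotentElem.trace_mul_mul {P : Matrix n n 𝕜} (hP : IsIdempotentElem P)
    (M : Matrix n n 𝕜) : (P * M * P).trace = (P * M).trace := by
  rw [trace_mul_cycle, hP.eq]

variable [DecidableEq n]

theorem PosSemidef.re_trace_mul_mul_proj_le {P M : Matrix n n 𝕜} (hP : P.IsHermitian)
    (hP2 : IsIdempotentElem P) (hM : M.PosSemidef) :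
    RCLike.re (P * M * P).trace ≤ RCLike.re M.trace := by
  have hQ : (1 - P).IsHermitian := isHermitian_one.sub hP
  have hcompl := (hM.mul_mul_conjTranspose_same (1 - P)).trace_nonneg
  rw [hQ.eq, hP2.one_sub.trace_mul_mul, sub_mul, one_mul, trace_sub, sub_nonneg] at hcompl
  rw [hP2.trace_mul_mul]
  exact (RCLike.le_iff_re_im.mp hcompl).1

theorem PosSemidef.re_trace_mul_proj_le {P M : Matrix n n 𝕜} (hP : P.IsHermitian)
    (hP2 : IsIdempotentElem P) (hM : M.PosSemidef) :
    RCLike.re (P * M).trace ≤ RCLike.re M.trace := by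
  simpa only [hP2.trace_mul_mul] using hM.re_trace_mul_mul_proj_le hP hP2

theorem PosSemidef.re_trace_proj_sandwich_ge {P L φ : Matrix n n 𝕜} (hP : P.IsHermitian)
    (hP2 : IsIdempotentElem P) (hL : L.IsHermitian) (hL2 : IsIdempotentElem L)
    (hφ : φ.PosSemidef) :
    RCLike.re (P * φ * P).trace
        - 2 * √(RCLike.re φ.trace) * √(RCLike.re ((1 - L) * φ * (1 - L)).trace) ≤
      RCLike.re (P * L * φ * L * P).trace := by
  set τ := RCLike.re φ.trace
  set t := RCLike.re ((1 - L) * φ * (1 - L)).trace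
  have hLc : (1 - L).IsHermitian := isHermitian_one.sub hL
  have hLφL : (L * φ * L).PosSemidef := by
    simpa only [hL.eq] using hφ.mul_mul_conjTranspose_same L
  have hLcφLc : ((1 - L) * φ * (1 - L)).PosSemidef := by
    have h := hφ.mul_mul_conjTranspose_same (1 - L)
    rwa [hLc.eq] at h
  have hPLcφLcP : RCLike.re (P * (1 - L) * φ * ((1 - L) * P)).trace ≤ t := by
    simpa only [← mul_assoc] using hLcφLc.re_trace_mul_mul_proj_le hP hP2
  have hPLφLP : RCLike.re (P * L * φ * (L * P)).trace ≤ τ := by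
    simpa only [← mul_assoc] using
      (hLφL.re_trace_mul_mul_proj_le hP hP2).trans (hφ.re_trace_mul_mul_proj_le hL hL2)
  have hPφP : RCLike.re (P * φ * P).trace ≤ τ := hφ.re_trace_mul_mul_proj_le hP hP2
  have hcross₁ : ‖(P * (1 - L) * φ * (L * P)).trace‖ ≤ √τ * √t := by
    refine (hφ.norm_trace_mul_mul_le _ _).trans ?_
    simp only [conjTranspose_mul, hP.eq, hL.eq, hLc.eq, mul_comm √τ]
    gcongr
  have hcross₂ : ‖(P * φ * ((1 - L) * P)).trace‖ ≤ √τ * √t := by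
    refine (hφ.norm_trace_mul_mul_le _ _).trans ?_
    simp only [conjTranspose_mul, hP.eq, hLc.eq]
    gcongr
  have hsplit : P * L * φ * L * P =
      P * φ * P - P * (1 - L) * φ * (L * P) - P * φ * ((1 - L) * P) := by
    noncomm_ring
  rw [hsplit, trace_sub, trace_sub, map_sub, map_sub]
  linarith [RCLike.re_le_norm (P * (1 - L) * φ * (L * P)).trace,
    RCLike.re_le_norm (P * φ * ((1 - L) * P)).trace]

theorem PosSemidef.re_trace_proj_sandwich_ge_of_trace_eq_one {P L φ : Matrix n n 𝕜}
    (hP : P.IsHermitian) (hP2 : IsIdempotentElem P) (hL : L.IsHermitian)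
    (hL2 : IsIdempotentElem L) (hφ : φ.PosSemidef) (htr : φ.trace = 1) :
    RCLike.re (P * φ).trace - 2 * √(1 - RCLike.re (L * φ).trace) ≤
      RCLike.re (P * L * φ * L * P).trace := by
  have h := hφ.re_trace_proj_sandwich_ge hP hP2 hL hL2
  rwa [hP2.trace_mul_mul, hL2.one_sub.trace_mul_mul, sub_mul, one_mul, trace_sub, htr,
    RCLike.one_re, Real.sqrt_one, mul_one, map_sub, RCLike.one_re] at h

end Matrix

theorem smoothing_bound {𝒳 : Type*} [Fintype 𝒳] {d : ℕ}
    (p : 𝒳 → ℝ) (hp : ∀ x, 0 ≤ p x) (hp1 : ∑ x, p x = 1)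
    (φ : 𝒳 → Matrix (Fin d) (Fin d) ℂ)
    (hφ : ∀ x, (φ x).PosSemidef) (hφtr : ∀ x, (φ x).trace = 1)
    (Λ : 𝒳 → Matrix (Fin d) (Fin d) ℂ)
    (hΛ : ∀ x, (Λ x).IsHermitian) (hΛ2 : ∀ x, Λ x * Λ x = Λ x)
    (Pr : Matrix (Fin d) (Fin d) ℂ)
    (hPr : Pr.IsHermitian) (hPr2 : Pr * Pr = Pr)
    (ε : ℝ) (hε0 : 0 ≤ ε)
    (hgood : 1 - ε ≤ ∑ x, p x * ((Λ x * φ x).trace).re)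
    (havg : 1 - ε ≤ ((Pr * ∑ x, (p x : ℂ) • φ x).trace).re) :
    1 - 2 * ε - 2 * Real.sqrt ε ≤
      ∑ x, p x * ((Pr * Λ x * φ x * Λ x * Pr).trace).re := by
  set t : 𝒳 → ℝ := fun x => 1 - ((Λ x * φ x).trace).re
  have ht : ∀ x, 0 ≤ t x := fun x => by
    have := (hφ x).re_trace_mul_proj_le (hΛ x) (hΛ2 x)
    rw [hφtr x] at this
    exact sub_nonneg.mpr this
  have havg' : 1 - ε ≤ ∑ x, p x * ((Pr * φ x).trace).re := by
    simpa [Matrix.mul_sum, Matrix.trace_sum, Complex.re_sum] using havg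
  have hjensen : ∑ x, p x * √(t x) ≤ √ε := by
    have := Real.strictConcaveOn_sqrt.concaveOn.le_map_sum (t := Finset.univ)
      (fun x _ => hp x) hp1 (fun x _ => Set.mem_Ici.mpr (ht x))
    refine this.trans (Real.sqrt_le_sqrt ?_)
    simp only [smul_eq_mul, t, mul_sub, mul_one, Finset.sum_sub_distrib, hp1]
    linarith
  have hterm : ∀ x, p x * (((Pr * φ x).trace).re - 2 * √(t x)) ≤
      p x * ((Pr * Λ x * φ x * Λ x * Pr).trace).re := fun x =>
    mul_le_mul_of_nonneg_left ((hφ x).re_trace_proj_sandwich_ge_of_trace_eq_one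
      hPr hPr2 (hΛ x) (hΛ2 x) (hφtr x)) (hp x)
  refine le_trans ?_ (Finset.sum_le_sum fun x _ => hterm x)
  simp only [mul_sub, Finset.sum_sub_distrib, ← Finset.mul_sum, mul_left_comm _ (2 : ℝ)]
  linarith [Real.sqrt_nonneg ε]
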